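/- arXiv:1302.5697 — 6 statements merged into one kernel-verified Lean document; each statement's English description precedes it below -/
import Mathlib

section
/- Let G be a finite group, let x be an automorphism of G of prime power order p^α, and let M = C_G(x) be the fixed-point subgroup of x in G. Suppose p divides the index [G : M], and suppose that either M is self-normalizing in G or Z(M) = 1. Then there exists g ∈ G such that x normalizes the conjugate M^g but does not centralize M^g (i.e. M^g is x-invariant but x does not fix M^g pointwise). -/
/-- if `x` is an automorphism of the finite group `G` of prime power
order `p ^ α`, `M = C_G(x)` is its fixed-point subgroup, `p` divides `[G : M]`,
and `M` is self-normalizing or has trivial center, then some conjugate `M ^ g`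
is normalized but not centralized by `x`. -/
theorem stmt_2 {G : Type*} [Group G] [Finite G] (x : MulAut G) (p α : ℕ)
    (hp : p.Prime) (hx : orderOf x = p ^ α)
    (M : Subgroup G) (hM : ∀ g : G, g ∈ M ↔ x g = g)
    (hdvd : p ∣ M.index)
    (hMs : Subgroup.normalizer (M : Set G) = M ∨ ∀ m ∈ M, (∀ m' ∈ M, m * m' = m' * m) → m = 1) :
    ∃ g : G, (∀ h ∈ M.map (MulAut.conj g⁻¹).toMonoidHom,
        x h ∈ M.map (MulAut.conj g⁻¹).toMonoidHom) ∧
      ¬ ∀ h ∈ M.map (MulAut.conj g⁻¹).toMonoidHom, x h = h := by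
  classical
  set H := Subgroup.zpowers x with hH
  -- every element of H fixes M pointwise
  have hfix : ∀ (y : H) (m : G), m ∈ M → (y : MulAut G) m = m := by
    intro y m hm
    have hxst : x ∈ MulAction.stabilizer (MulAut G) m := by
      simpa [MulAction.mem_stabilizer_iff, MulAut.smul_def] using (hM m).mp hm
    have : (y : MulAut G) ∈ MulAction.stabilizer (MulAut G) m :=
      Subgroup.zpowers_le.mpr hxst y.2
    simpa [MulAction.mem_stabilizer_iff, MulAut.smul_def] using this
  -- action of H on G ⧸ M
  letI : MulAction H (G ⧸ M) :=
    { smul := fun y => Quotient.map' (fun g => (y : MulAut G) g)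
        (by
          intro g g' h
          simp only [QuotientGroup.leftRel_apply] at h ⊢
          have h2 : (y : MulAut G) (g⁻¹ * g') = g⁻¹ * g' := hfix y _ h
          rw [map_mul, map_inv] at h2
          rw [h2]; exact h)
      one_smul := fun q => by
        induction q using Quotient.inductionOn' with
        | h g => rfl
      mul_smul := fun y z q => by
        induction q using Quotient.inductionOn' with
        | h g => rfl }
  haveI : Fact p.Prime := ⟨hp⟩
  have hPG : IsPGroup p H := IsPGroup.of_card (by rw [Nat.card_zpowers, hx])
  have hmod := hPG.card_modEq_card_fixedPoints (G ⧸ M)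
  have hcard1 : Nat.card (G ⧸ M) = M.index := rfl
  have hdvd2 : p ∣ Nat.card (MulAction.fixedPoints H (G ⧸ M)) :=
    Nat.modEq_zero_iff_dvd.mp
      ((hmod.symm.trans (Nat.modEq_zero_iff_dvd.mpr (hcard1 ▸ hdvd))))
  have smul_mk : ∀ (y : H) (g : G),
      y • (QuotientGroup.mk g : G ⧸ M) = QuotientGroup.mk ((y : MulAut G) g) := fun y g => rfl
  have h1fix : (QuotientGroup.mk (1 : G) : G ⧸ M) ∈ MulAction.fixedPoints H (G ⧸ M) := by
    intro y
    rw [smul_mk, map_one]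
  have hpos : 0 < Nat.card (MulAction.fixedPoints H (G ⧸ M)) :=
    Nat.card_pos_iff.mpr ⟨⟨_, h1fix⟩, Set.Finite.to_subtype (Set.toFinite _)⟩
  have h2le : 1 < (MulAction.fixedPoints H (G ⧸ M)).ncard := by
    rw [← Nat.card_coe_set_eq]
    exact lt_of_lt_of_le hp.one_lt (Nat.le_of_dvd hpos hdvd2)
  obtain ⟨q, hqfix, hq1⟩ := Set.exists_ne_of_one_lt_ncard h2le (QuotientGroup.mk (1 : G))
  obtain ⟨a, rfl⟩ := QuotientGroup.mk_surjective q
  have haM : a ∉ M := fun h => hq1 (QuotientGroup.eq.mpr (by simpa using inv_mem h))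
  have hxa : (QuotientGroup.mk (x a) : G ⧸ M) = QuotientGroup.mk a := by
    have := hqfix ⟨x, Subgroup.mem_zpowers x⟩
    rwa [smul_mk] at this
  have hm0 : a⁻¹ * x a ∈ M := by
    have := QuotientGroup.eq.mp hxa
    simpa using inv_mem this
  refine ⟨a⁻¹, ?_, ?_⟩
  · simp only [inv_inv]
    rintro h hh
    rw [Subgroup.mem_map] at hh ⊢
    obtain ⟨m, hm, rfl⟩ := hh
    refine ⟨(a⁻¹ * x a) * m * (a⁻¹ * x a)⁻¹,
      mul_mem (mul_mem hm0 hm) (inv_mem hm0), ?_⟩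
    simp only [MulEquiv.coe_toMonoidHom, MulAut.conj_apply]
    have hxm : x m = m := (hM m).mp hm
    calc a * (a⁻¹ * x a * m * (a⁻¹ * x a)⁻¹) * a⁻¹
        = x a * m * (x a)⁻¹ := by group
      _ = x (a * m * a⁻¹) := by rw [map_mul, map_mul, map_inv, hxm]
  · simp only [inv_inv]
    intro hall
    -- the conjugate subgroup equals M
    have hle : M.map (MulAut.conj a).toMonoidHom ≤ M := fun h hh => (hM h).mpr (hall h hh)
    have hKcard : Nat.card M ≤ Nat.card (M.map (MulAut.conj a).toMonoidHom) :=
      le_of_eq (Nat.card_congr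
        (M.equivMapOfInjective ((MulAut.conj a).toMonoidHom) (MulAut.conj a).injective).toEquiv)
    have hKM : M.map (MulAut.conj a).toMonoidHom = M :=
      Subgroup.eq_of_le_of_card_ge hle hKcard
    have hconj : ∀ m' ∈ M, a * m' * a⁻¹ ∈ M := by
      intro m' hm'
      rw [← hKM]
      exact ⟨m', hm', rfl⟩
    rcases hMs with hnorm | hZ
    · refine haM ?_
      rw [← hnorm, Subgroup.mem_normalizer_iff]
      intro h
      constructor
      · exact fun hh => hconj h hh
      · intro hh
        rw [← hKM, Subgroup.mem_map] at hh
        obtain ⟨m, hm, hme⟩ := hh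
        simp only [MulEquiv.coe_toMonoidHom, MulAut.conj_apply] at hme
        have : m = h := by
          have := mul_left_cancel (mul_right_cancel hme)
          exact this
        exact this ▸ hm
    · have hcomm : ∀ m' ∈ M, (a⁻¹ * x a) * m' = m' * (a⁻¹ * x a) := by
        intro m' hm'
        have hmem : a * m' * a⁻¹ ∈ M.map (MulAut.conj a).toMonoidHom := ⟨m', hm', rfl⟩
        have h1 : x (a * m' * a⁻¹) = a * m' * a⁻¹ := hall _ hmem
        have hxm' : x m' = m' := (hM m').mp hm'
        rw [map_mul, map_mul, map_inv, hxm'] at h1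
        -- h1 : x a * m' * (x a)⁻¹ = a * m' * a⁻¹
        have : a⁻¹ * x a * m' * (a⁻¹ * x a)⁻¹ = m' := by
          have := congrArg (fun t => a⁻¹ * t * a) h1
          simpa [mul_assoc] using this
        calc a⁻¹ * x a * m' = (a⁻¹ * x a * m' * (a⁻¹ * x a)⁻¹) * (a⁻¹ * x a) := by group
          _ = m' * (a⁻¹ * x a) := by rw [this]
      have : a⁻¹ * x a = 1 := hZ _ hm0 hcomm
      have hxa' : x a = a := by
        have := congrArg (fun t => a * t) this
        simpa [mul_assoc] using this
      exact haM ((hM a).mpr hxa')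
end

section
/- Let L be a nonabelian finite simple group and t ≥ 2, and consider the wreath-product-type situation: let x = (σ₁, …, σ_t)τ ∈ Aut(L)^t ⋊ S_t where τ is a t-cycle. Suppose there exist l₁, l₂ ∈ L of prime order p with ⟨l₁, l₂⟩ nonsolvable. Then (after relabeling so τ = (1,2,…,t)) the element y = (l₁, 1, …, 1, l₂^{σ_t^{-1}}) has order p and the projection of ⟨y^x, y⟩ to the first coordinate contains a copy of ⟨l₁, l₂⟩; in particular ⟨x, y⟩ is not solvable. -/
/-- The homomorphism `Perm (Fin t) →* MulAut ((Fin t → MulAut L))` permuting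
coordinates, used to form the wreath product `Aut(L)^t ⋊ S_t`. -/
def permCoords (t : ℕ) (L : Type*) [Group L] :
    Equiv.Perm (Fin t) →* MulAut (Fin t → MulAut L) where
  toFun σ := MulEquiv.arrowCongr σ (MulEquiv.refl (MulAut L))
  map_one' := by ext u i; rfl
  map_mul' σ τ := by ext u i; rfl

lemma aux_conj_conj {L : Type*} [Group L] (α : MulAut L) (g : L) :
    α * MulAut.conj g * α⁻¹ = MulAut.conj (α g) := by
  ext h
  simp [MulAut.mul_apply, MulAut.conj_apply, map_mul, map_inv]

lemma aux_center_bot {L : Type*} [Group L] [IsSimpleGroup L]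
    (hnonab : ∃ a b : L, a * b ≠ b * a) : Subgroup.center L = ⊥ := by
  rcases IsSimpleGroup.eq_bot_or_eq_top_of_normal (Subgroup.center L)
    inferInstance with h | h
  · exact h
  · obtain ⟨a, b, hab⟩ := hnonab
    exact absurd ((Subgroup.mem_center_iff.1 (h ▸ Subgroup.mem_top a)) b).symm hab

lemma aux_conj_injective {L : Type*} [Group L] [IsSimpleGroup L]
    (hnonab : ∃ a b : L, a * b ≠ b * a) :
    Function.Injective (MulAut.conj : L →* MulAut L) := by
  intro a b hab
  have : b⁻¹ * a ∈ Subgroup.center L := by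
    rw [Subgroup.mem_center_iff]
    intro g
    have key : a * g * a⁻¹ = b * g * b⁻¹ := by
      have := congrArg (fun e : MulAut L => e g) hab
      simpa [MulAut.conj_apply] using this
    calc g * (b⁻¹ * a) = b⁻¹ * (b * g * b⁻¹) * a := by group
      _ = b⁻¹ * (a * g * a⁻¹) * a := by rw [← key]
      _ = b⁻¹ * a * g := by group
  rw [aux_center_bot hnonab, Subgroup.mem_bot] at this
  exact (inv_mul_eq_one.mp this).symm

/-- in the wreath product `Aut(L)^t ⋊ S_t` (`L` nonabelian finite
simple, `t ≥ 2`), if `x = (σ₁, …, σ_t)τ` with `τ` a `t`-cycle and `l₁, l₂ ∈ L`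
have prime order `p` with `⟨l₁, l₂⟩` nonsolvable, then there is an element `y`
of the base group `L^t` (embedded via inner automorphisms) of order `p` with
`⟨x, y⟩` nonsolvable. -/
theorem stmt_9 (t : ℕ) (ht : 2 ≤ t) (L : Type*) [Group L] [Finite L]
    [IsSimpleGroup L] (hnonab : ∃ a b : L, a * b ≠ b * a)
    (x : (Fin t → MulAut L) ⋊[permCoords t L] Equiv.Perm (Fin t))
    (hτ : x.right.IsCycle ∧ x.right.support = Finset.univ)
    (p : ℕ) (hp : p.Prime) (l₁ l₂ : L)
    (h₁ : orderOf l₁ = p) (h₂ : orderOf l₂ = p)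
    (hns : ¬ IsSolvable ↥(Subgroup.closure {l₁, l₂})) :
    ∃ y : (Fin t → MulAut L) ⋊[permCoords t L] Equiv.Perm (Fin t),
      (∃ v : Fin t → L, y = ⟨fun i => MulAut.conj (v i), 1⟩) ∧
      orderOf y = p ∧
      ¬ IsSolvable ↥(Subgroup.closure {x, y}) := by
  haveI : NeZero t := ⟨by omega⟩
  set τ : Equiv.Perm (Fin t) := x.right with hτdef
  set σ : Fin t → MulAut L := x.left with hσdef
  set j : Fin t := τ 0 with hj
  have hj0 : j ≠ 0 := by
    have : (0 : Fin t) ∈ τ.support := hτ.2 ▸ Finset.mem_univ _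
    exact Equiv.Perm.mem_support.1 this
  have hconjinj := aux_conj_injective (L := L) hnonab
  set v : Fin t → L := fun i => if i = 0 then l₁ else if i = j then σ j l₂ else 1 with hv
  set w : Fin t → MulAut L := fun i => MulAut.conj (v i) with hw
  set y : (Fin t → MulAut L) ⋊[permCoords t L] Equiv.Perm (Fin t) :=
    SemidirectProduct.inl w with hy
  have hw0 : w 0 = MulAut.conj l₁ := by simp [hw, hv]
  have hwj : w j = MulAut.conj (σ j l₂) := by simp [hw, hv, hj0]
  -- conjugate element
  set u : Fin t → MulAut L := fun i => (σ (τ i))⁻¹ * w (τ i) * σ (τ i) with hu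
  have hconj : x⁻¹ * y * x = SemidirectProduct.inl u := by
    ext i
    · simp [SemidirectProduct.mul_left, SemidirectProduct.inv_left, hy, hu,
        permCoords, MulAut.mul_apply]
      rfl
    · simp [SemidirectProduct.mul_right, SemidirectProduct.inv_right, hy]
  have hu0 : u 0 = MulAut.conj l₂ := by
    have : (σ j)⁻¹ * (σ j * MulAut.conj l₂ * (σ j)⁻¹) * σ j = MulAut.conj l₂ := by group
    calc u 0 = (σ j)⁻¹ * w j * σ j := rfl
      _ = (σ j)⁻¹ * (σ j * MulAut.conj l₂ * (σ j)⁻¹) * σ j := by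
          rw [hwj, aux_conj_conj]
      _ = MulAut.conj l₂ := this
  refine ⟨y, ⟨v, rfl⟩, ?_, ?_⟩
  · -- order of y is p
    haveI : Fact p.Prime := ⟨hp⟩
    refine orderOf_eq_prime ?_ ?_
    · rw [hy, ← map_pow]
      convert map_one (SemidirectProduct.inl (φ := permCoords t L))
      funext i
      rw [hw]
      show (MulAut.conj (v i)) ^ p = 1
      rw [← map_pow]
      have : (v i) ^ p = 1 := by
        rw [hv]
        dsimp only
        split_ifs with h h'
        · rw [← h₁]; exact pow_orderOf_eq_one l₁
        · rw [← map_pow, ← h₂, pow_orderOf_eq_one, map_one]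
        · exact one_pow p
      rw [this, map_one]
    · intro hy1
      apply hns
      exfalso
      have : w 0 = 1 := by
        have : w = 1 := SemidirectProduct.inl_injective (by rw [← hy, hy1, map_one])
        rw [this]; rfl
      rw [hw0] at this
      have hl1 : l₁ = 1 := hconjinj (by rw [this, map_one])
      rw [hl1, orderOf_one] at h₁
      exact hp.one_lt.ne (by omega)
  · -- nonsolvable
    intro hsolv
    apply hns
    -- H1 = closure {y, x⁻¹yx} ≤ closure {x, y}
    have hle : Subgroup.closure {y, x⁻¹ * y * x} ≤ Subgroup.closure {x, y} := by
      rw [Subgroup.closure_le]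
      rintro z (rfl | rfl)
      · exact Subgroup.subset_closure (by simp)
      · exact Subgroup.mul_mem _ (Subgroup.mul_mem _
          (Subgroup.inv_mem _ (Subgroup.subset_closure (by simp)))
          (Subgroup.subset_closure (by simp)))
          (Subgroup.subset_closure (by simp))
    haveI : Group.IsSolvable ↥(Subgroup.closure {y, x⁻¹ * y * x}) := by
      haveI : Group.IsSolvable ↥(Subgroup.closure {x, y}) := hsolv
      exact solvable_of_solvable_injective (Subgroup.inclusion_injective hle)
    -- transfer to base group
    have hmap : Subgroup.map (SemidirectProduct.inl (φ := permCoords t L))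
        (Subgroup.closure {w, u}) = Subgroup.closure {y, x⁻¹ * y * x} := by
      rw [MonoidHom.map_closure, Set.image_insert_eq, Set.image_singleton, hconj]
    haveI : Group.IsSolvable ↥(Subgroup.closure ({w, u} : Set (Fin t → MulAut L))) := by
      have e := Subgroup.equivMapOfInjective (Subgroup.closure {w, u})
        (SemidirectProduct.inl (φ := permCoords t L)) SemidirectProduct.inl_injective
      rw [hmap] at e
      exact solvable_of_solvable_injective (f := e.toMonoidHom) e.injective
    -- project to coordinate 0
    have hmap2 : Subgroup.map (Pi.evalMonoidHom (fun _ : Fin t => MulAut L) 0)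
        (Subgroup.closure {w, u}) = Subgroup.closure {MulAut.conj l₁, MulAut.conj l₂} := by
      rw [MonoidHom.map_closure, Set.image_insert_eq, Set.image_singleton]
      show Subgroup.closure {w 0, u 0} = _
      rw [hw0, hu0]
    haveI : Group.IsSolvable ↥(Subgroup.closure ({MulAut.conj l₁, MulAut.conj l₂} : Set (MulAut L))) := by
      rw [← hmap2]
      exact solvable_of_surjective
        (MonoidHom.subgroupMap_surjective (Pi.evalMonoidHom (fun _ : Fin t => MulAut L) 0)
          (Subgroup.closure {w, u}))
    -- transfer back via conj
    have hmap3 : Subgroup.map (MulAut.conj : L →* MulAut L) (Subgroup.closure {l₁, l₂}) =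
        Subgroup.closure {MulAut.conj l₁, MulAut.conj l₂} := by
      rw [MonoidHom.map_closure, Set.image_insert_eq, Set.image_singleton]
    have e := Subgroup.equivMapOfInjective (Subgroup.closure {l₁, l₂})
      (MulAut.conj : L →* MulAut L) hconjinj
    rw [hmap3] at e
    exact solvable_of_solvable_injective (f := e.toMonoidHom) e.injective
end

section
/- Assume: (Thm A) for every finite group G, p odd prime, and p-element x ∈ G, x ∈ R(G) iff ⟨x,y⟩ is solvable for all 2-elements y; and (Thm B) for every finite group G and x ∈ G, x ∈ R(G) iff ⟨x,y⟩ is solvable for all p-elements y for all odd primes p. Then for any finite group G and x ∈ G with decomposition x = x₂ x_{2'} into commuting 2-part and 2'-part: x ∈ R(G) if and only if (i) ⟨x₂, y⟩ is solvable for all p-elements y for all odd primes p, and (ii) ⟨x_{2'}, y⟩ is solvable for all 2-elements y ∈ G. -/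
/-- `R` is the solvable radical of `G`: the largest solvable normal subgroup. -/
def IsSolvableRadical {G : Type*} [Group G] (R : Subgroup G) : Prop :=
  R.Normal ∧ IsSolvable ↥R ∧ ∀ N : Subgroup G, N.Normal → IsSolvable ↥N → N ≤ R

/-- If `K ≤ H` and `H` is solvable then `K` is solvable. -/
lemma solvable_of_le {G : Type} [Group G] {K H : Subgroup G} (h : K ≤ H)
    (hH : IsSolvable ↥H) : IsSolvable ↥K := by
  haveI : Group.IsSolvable ↥H := hH
  exact solvable_of_solvable_injective (Subgroup.inclusion_injective h)

/-- Solvability of `⟨z, y⟩` descends to `⟨z ^ k, y⟩`. -/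
lemma solvable_closure_pow {G : Type} [Group G] (z y : G) (k : ℕ)
    (h : IsSolvable ↥(Subgroup.closure {z, y})) :
    IsSolvable ↥(Subgroup.closure {z ^ k, y}) := by
  refine solvable_of_le ?_ h
  rw [Subgroup.closure_le]
  rintro w hw
  rcases hw with rfl | rfl
  · exact Subgroup.pow_mem _ (Subgroup.subset_closure (by simp)) k
  · exact Subgroup.subset_closure (by simp)

/-- If `z` lies in a solvable normal subgroup `R`, then `⟨z, y⟩` is solvable
for every `y`. -/
lemma closure_pair_solvable {G : Type} [Group G] (R : Subgroup G)
    (hN : R.Normal) (hS : IsSolvable ↥R) (z y : G) (hz : z ∈ R) :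
    IsSolvable ↥(Subgroup.closure {z, y}) := by
  set H := Subgroup.closure ({z, y} : Set G) with hH
  haveI := hN
  let g : ↥H →* G ⧸ R := (QuotientGroup.mk' R).comp H.subtype
  have hmem : ∀ h : ↥H, g h ∈ Subgroup.zpowers ((QuotientGroup.mk' R) y) := by
    intro h
    have : H ≤ (Subgroup.zpowers ((QuotientGroup.mk' R) y)).comap (QuotientGroup.mk' R) := by
      rw [hH, Subgroup.closure_le]
      rintro w hw
      rcases hw with rfl | rfl
      · have h1 : ((QuotientGroup.mk' R) w) = 1 := (QuotientGroup.eq_one_iff w).mpr hz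
        show w ∈ Subgroup.comap _ _
        rw [Subgroup.mem_comap, h1]
        exact Subgroup.one_mem _
      · exact Subgroup.mem_comap.mpr (Subgroup.mem_zpowers _)
    exact Subgroup.mem_comap.mp (this h.2)
  let g' : ↥H →* ↥(Subgroup.zpowers ((QuotientGroup.mk' R) y)) :=
    g.codRestrict _ hmem
  let f : ↥(R.subgroupOf H) →* ↥H := (R.subgroupOf H).subtype
  have hker : g'.ker ≤ f.range := by
    intro a ha
    have h1 : g a = 1 := congrArg Subtype.val (MonoidHom.mem_ker.mp ha)
    have h2 : (a : G) ∈ R := (QuotientGroup.eq_one_iff _).mp h1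
    rw [Subgroup.range_subtype]
    exact Subgroup.mem_subgroupOf.mpr h2
  haveI : Group.IsSolvable ↥(R.subgroupOf H) := by
    let j : ↥(R.subgroupOf H) →* ↥R :=
      { toFun := fun a => ⟨a.1.1, Subgroup.mem_subgroupOf.mp a.2⟩,
        map_one' := rfl, map_mul' := fun _ _ => rfl }
    have hj : Function.Injective j := by
      intro a b hab
      have h1 := congrArg (fun t : ↥R => (t : G)) hab
      apply Subtype.ext
      apply Subtype.ext
      exact h1
    haveI : Group.IsSolvable ↥R := hS
    exact solvable_of_solvable_injective hj
  haveI : Group.IsSolvable ↥(Subgroup.zpowers ((QuotientGroup.mk' R) y)) :=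
    isSolvable_of_comm fun a b => IsMulCommutative.is_comm.comm a b
  exact solvable_of_ker_le_range f g' hker

/-- Key induction: an odd-order element all of whose odd-prime-power "parts"
criterion holds lies in `R`. -/
lemma mem_of_odd_order {G : Type} [Group G] [Finite G] (R : Subgroup G)
    (hpart : ∀ p : ℕ, p.Prime → Odd p → ∀ w : G, (∃ k : ℕ, orderOf w = p ^ k) →
      (∀ y : G, (∃ k : ℕ, orderOf y = 2 ^ k) → IsSolvable ↥(Subgroup.closure {w, y})) → w ∈ R) :
    ∀ z : G, Odd (orderOf z) →
      (∀ y : G, (∃ k : ℕ, orderOf y = 2 ^ k) → IsSolvable ↥(Subgroup.closure {z, y})) → z ∈ R := by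
  suffices H : ∀ n : ℕ, ∀ z : G, orderOf z = n → Odd n →
      (∀ y : G, (∃ k : ℕ, orderOf y = 2 ^ k) → IsSolvable ↥(Subgroup.closure {z, y})) → z ∈ R by
    intro z hodd hsol; exact H (orderOf z) z rfl hodd hsol
  intro n
  induction n using Nat.strong_induction_on with
  | _ n ih =>
    intro z hz hodd hsol
    have hnpos : 0 < n := hz ▸ orderOf_pos z
    rcases eq_or_ne n 1 with h1 | h1
    · have : z = 1 := orderOf_eq_one_iff.mp (by rw [hz, h1])
      rw [this]; exact R.one_mem
    · set p := n.minFac with hpdef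
      have hp : p.Prime := Nat.minFac_prime h1
      have hpdvd : p ∣ n := Nat.minFac_dvd n
      have hpodd : Odd p := by
        refine hp.odd_of_ne_two fun h2 => ?_
        have h2dvd : 2 ∣ n := h2 ▸ hpdvd
        have := Nat.odd_iff.mp hodd
        omega
      set a := n.factorization p with hadef
      have hapos : 0 < a := hp.factorization_pos_of_dvd hnpos.ne' hpdvd
      set pa := p ^ a with hpadef
      set m := n / pa with hmdef
      have hmul : pa * m = n := Nat.ordProj_mul_ordCompl_eq_self n p
      have hcop : Nat.Coprime pa m := (Nat.coprime_ordCompl hp hnpos.ne').pow_left a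
      have hmdvd : m ∣ n := ⟨pa, by rw [← hmul]; ring⟩
      have hpadvd : pa ∣ n := ⟨m, hmul.symm⟩
      have hmodd : Odd m := by
        rw [Nat.odd_iff] at hodd ⊢
        by_contra hmo
        have h2m : 2 ∣ m := by omega
        have h2n : 2 ∣ n := h2m.trans hmdvd
        omega
      have hpa1 : 1 < pa := by
        have := hp.two_le
        calc 1 < p := by omega
          _ ≤ p ^ a := Nat.le_self_pow hapos.ne' p
      have hmpos : 0 < m := by
        rcases Nat.eq_zero_or_pos m with h | h
        · rw [h, mul_zero] at hmul; omega
        · exact h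
      have hmlt : m < n := by
        calc m = 1 * m := (one_mul m).symm
          _ < pa * m := (Nat.mul_lt_mul_right hmpos).mpr hpa1
          _ = n := hmul
      -- the p-part z ^ m
      have hordm : orderOf (z ^ m) = pa := by
        rw [orderOf_pow z, hz, Nat.gcd_eq_right hmdvd, ← hmul,
          Nat.mul_div_cancel _ hmpos]
      have hzm : z ^ m ∈ R := by
        refine hpart p hp hpodd (z ^ m) ⟨a, hordm⟩ ?_
        intro y hy
        exact solvable_closure_pow z y m (hsol y hy)
      -- the p'-part z ^ pa
      have hordpa : orderOf (z ^ pa) = m := by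
        rw [orderOf_pow z, hz, Nat.gcd_eq_right hpadvd]
      have hzpa : z ^ pa ∈ R := by
        refine ih m hmlt (z ^ pa) hordpa hmodd ?_
        intro y hy
        exact solvable_closure_pow z y pa (hsol y hy)
      -- Bezout
      have hb : (1 : ℤ) = pa * Nat.gcdA pa m + m * Nat.gcdB pa m := by
        have := Nat.gcd_eq_gcd_ab pa m
        rwa [hcop, Nat.cast_one] at this
      have hzdecomp : z = (z ^ pa) ^ (Nat.gcdA pa m) * (z ^ m) ^ (Nat.gcdB pa m) := by
        rw [← zpow_natCast z pa, ← zpow_natCast z m, ← zpow_mul, ← zpow_mul, ← zpow_add,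
          ← hb, zpow_one]
      rw [hzdecomp]
      exact R.mul_mem (R.zpow_mem hzpa _) (R.zpow_mem hzm _)

set_option maxHeartbeats 2000000 in
/-- Corollary: assuming the two main theorems (radical
membership criteria via 2-elements for odd-order `p`-elements, and via odd
`p`-elements in general), an element `x = x₂ x₂'` (commuting 2-part and
2'-part, both powers of `x`) lies in `R(G)` iff `⟨x₂, y⟩` is solvable for all
`p`-elements `y` for all odd primes `p` and `⟨x₂', y⟩` is solvable for all
`2`-elements `y`. -/
theorem stmt_14
    (thmA : ∀ (H : Type) (_ : Group H) (_ : Finite H) (S : Subgroup H),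
      IsSolvableRadical S → ∀ p : ℕ, p.Prime → Odd p →
        ∀ z : H, (∃ k : ℕ, orderOf z = p ^ k) →
          (z ∈ S ↔ ∀ y : H, (∃ k : ℕ, orderOf y = 2 ^ k) →
            IsSolvable ↥(Subgroup.closure {z, y})))
    (thmB : ∀ (H : Type) (_ : Group H) (_ : Finite H) (S : Subgroup H),
      IsSolvableRadical S → ∀ z : H,
        (z ∈ S ↔ ∀ p : ℕ, p.Prime → Odd p →
          ∀ y : H, (∃ k : ℕ, orderOf y = p ^ k) →
            IsSolvable ↥(Subgroup.closure {z, y})))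
    (G : Type) (_ : Group G) (_ : Finite G) (R : Subgroup G)
    (hR : IsSolvableRadical R) (x x₂ x₂' : G)
    (h2pow : ∃ k : ℕ, x₂ = x ^ k) (h2ord : ∃ α : ℕ, orderOf x₂ = 2 ^ α)
    (h2' : x₂' = x * x₂⁻¹) (h2'odd : Odd (orderOf x₂')) :
    x ∈ R ↔
      ((∀ p : ℕ, p.Prime → Odd p → ∀ y : G, (∃ k : ℕ, orderOf y = p ^ k) →
          IsSolvable ↥(Subgroup.closure {x₂, y})) ∧
        (∀ y : G, (∃ k : ℕ, orderOf y = 2 ^ k) →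
          IsSolvable ↥(Subgroup.closure {x₂', y}))) := by
  obtain ⟨hNorm, hSolv, hMax⟩ := hR
  have hR' : IsSolvableRadical R := ⟨hNorm, hSolv, hMax⟩
  constructor
  · intro hx
    have hx2 : x₂ ∈ R := by
      obtain ⟨k, hk⟩ := h2pow
      rw [hk]; exact R.pow_mem hx k
    have hx2' : x₂' ∈ R := by
      rw [h2']; exact R.mul_mem hx (R.inv_mem hx2)
    exact ⟨(thmB G ‹Group G› ‹Finite G› R hR' x₂).mp hx2,
      fun y _ => closure_pair_solvable R hNorm hSolv x₂' y hx2'⟩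
  · rintro ⟨h1, h2⟩
    have hx2 : x₂ ∈ R := (thmB G ‹Group G› ‹Finite G› R hR' x₂).mpr h1
    have hx2' : x₂' ∈ R := by
      refine mem_of_odd_order R ?_ x₂' h2'odd h2
      intro p hp hodd w hw hsolw
      exact (thmA G ‹Group G› ‹Finite G› R hR' p hp hodd w hw).mpr hsolw
    have hxeq : x = x₂' * x₂ := by rw [h2']; group
    rw [hxeq]; exact R.mul_mem hx2' hx2
end

section
/- Let n ≥ 5 with n ≠ 6, G = S_n, and x ∈ G an involution. Then there exists an element y ∈ G of order 5 such that ⟨x, y⟩ is not solvable. Specifically, one may take y = (1,2,3,4,5) after conjugating x to one of (1,2), (1,2)(3,4), or (1,2)(3,4)(5,6)σ with σ ∈ Sym{7,…,n}, σ² = 1; in each case ⟨x, y⟩ contains Alt{1,…,5}. -/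
open Equiv Equiv.Perm Subgroup

namespace Stmt17

set_option linter.unusedSectionVars false

variable {β : Type*} [DecidableEq β] [Fintype β]

lemma disj_of {f g : Perm β} (h : ∀ z, f z = z ∨ g z = z) : f.Disjoint g := h

lemma prod_fix : ∀ (l : List (Perm β)) (z : β), (∀ g ∈ l, g z = z) → l.prod z = z
  | [], _, _ => rfl
  | a :: t, z, h => by
    rw [List.prod_cons, Perm.mul_apply,
      prod_fix t z fun g hg => h g (List.mem_cons_of_mem _ hg), h a (List.mem_cons_self)]

lemma swapList : ∀ l : List (Perm β), l.Pairwise Perm.Disjoint → (∀ g ∈ l, Perm.IsSwap g) →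
    l.prod.cycleType = Multiset.replicate l.length 2 ∧ l.prod * l.prod = 1
  | [], _, _ => by simp
  | a :: t, hp, hs => by
    have hpc := List.pairwise_cons.1 hp
    have hd : Perm.Disjoint a t.prod := Perm.disjoint_prod_right _ hpc.1
    obtain ⟨hct, ht2⟩ := swapList t hpc.2 fun g hg => hs g (List.mem_cons_of_mem _ hg)
    obtain ⟨p, q, hpq, ha⟩ := hs a (List.mem_cons_self)
    have hac : a.cycleType = {2} := by
      rw [ha, (isCycle_swap hpq).cycleType, card_support_swap hpq]
    constructor
    · rw [List.prod_cons, Perm.Disjoint.cycleType_mul hd, hac, hct, List.length_cons, Multiset.replicate_succ,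
        ← Multiset.singleton_add]
    · have hcm : Commute a t.prod := Perm.Disjoint.commute hd
      have ha2 : a * a = 1 := by rw [ha]; exact swap_mul_self _ _
      have key : a * t.prod * (a * t.prod) = a * a * (t.prod * t.prod) := by
        rw [mul_assoc, ← mul_assoc t.prod, ← hcm.eq]
        simp only [mul_assoc]
      rw [List.prod_cons, key, ha2, ht2, one_mul]

def finLtEquiv {m n : ℕ} (h : m ≤ n) : Fin m ≃ {z : Fin n // z.val < m} where
  toFun j := ⟨⟨j.1, lt_of_lt_of_le j.2 h⟩, j.2⟩
  invFun z := ⟨z.1.1, z.2⟩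
  left_inv _ := rfl
  right_inv _ := rfl

def phi {m n : ℕ} (h : m ≤ n) : Perm (Fin m) →* Perm (Fin n) :=
  Perm.extendDomainHom (finLtEquiv h)

lemma phi_apply {m n : ℕ} (h : m ≤ n) (g : Perm (Fin m)) :
    phi h g = g.extendDomain (finLtEquiv h) := rfl

lemma phi_cycleType {m n : ℕ} (h : m ≤ n) (g : Perm (Fin m)) :
    (phi h g).cycleType = g.cycleType := by
  rw [phi_apply, cycleType_extendDomain]

lemma phi_fix {m n : ℕ} (h : m ≤ n) (g : Perm (Fin m)) (z : Fin n) (hz : ¬ z.val < m) :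
    phi h g z = z := by
  rw [phi_apply]
  exact extendDomain_apply_not_subtype _ _ hz

lemma phi_inj {m n : ℕ} (h : m ≤ n) : Function.Injective (phi h) :=
  extendDomainHom_injective _

def u1 : Perm (Fin 5) := swap 0 1
def u2 : Perm (Fin 5) := swap 0 1 * swap 2 3
def b5 : Perm (Fin 5) := swap 0 1 * swap 1 2 * swap 2 3 * swap 3 4
def a6 : Perm (Fin 6) := swap 0 1 * swap 2 3 * swap 4 5
def b6 : Perm (Fin 6) := swap 0 1 * swap 1 2 * swap 2 4 * swap 4 3
def c6 : Perm (Fin 6) := a6 * b6 * a6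

lemma u1_ct : u1.cycleType = Multiset.replicate 1 2 := by
  have h := swapList ([swap 0 1] : List (Perm (Fin 5)))
    (List.pairwise_singleton _ _)
    (by rintro g hg; rw [List.mem_singleton] at hg; subst hg
        exact ⟨(0 : Fin 5), 1, by decide, rfl⟩)
  have hu : u1 = ([swap 0 1] : List (Perm (Fin 5))).prod := by
    simp [u1, List.prod_cons, List.prod_nil]
  rw [hu, h.1, List.length_singleton]

lemma u2_ct : u2.cycleType = Multiset.replicate 2 2 := by
  have h := swapList ([swap 0 1, swap 2 3] : List (Perm (Fin 5)))
    (List.pairwise_cons.2 ⟨fun g hg => by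
        rw [List.mem_singleton] at hg; subst hg; exact disj_of (by decide),
      List.pairwise_singleton _ _⟩)
    (by rintro g hg
        rcases (by simpa using hg : g = swap 0 1 ∨ g = swap 2 3) with rfl | rfl
        exacts [⟨(0 : Fin 5), 1, by decide, rfl⟩, ⟨(2 : Fin 5), 3, by decide, rfl⟩])
  have hu : u2 = ([swap 0 1, swap 2 3] : List (Perm (Fin 5))).prod := by
    simp [u2, List.prod_cons, List.prod_nil]
  rw [hu, h.1]
  rfl

lemma a6_ct : a6.cycleType = Multiset.replicate 3 2 := by
  have h := swapList ([swap 0 1, swap 2 3, swap 4 5] : List (Perm (Fin 6)))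
    (by
      refine List.pairwise_cons.2 ⟨?_, List.pairwise_cons.2 ⟨?_, List.pairwise_singleton _ _⟩⟩
      · intro g hg
        rcases (by simpa using hg : g = swap 2 3 ∨ g = swap 4 5) with rfl | rfl
        exacts [disj_of (by decide), disj_of (by decide)]
      · intro g hg
        rw [List.mem_singleton] at hg; subst hg
        exact disj_of (by decide))
    (by rintro g hg
        rcases (by simpa using hg : g = swap 0 1 ∨ g = swap 2 3 ∨ g = swap 4 5)
          with rfl | rfl | rfl
        exacts [⟨(0 : Fin 6), 1, by decide, rfl⟩, ⟨(2 : Fin 6), 3, by decide, rfl⟩,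
          ⟨(4 : Fin 6), 5, by decide, rfl⟩])
  have ha : a6 = ([swap 0 1, swap 2 3, swap 4 5] : List (Perm (Fin 6))).prod := by
    simp [a6, List.prod_cons, List.prod_nil, mul_assoc]
  rw [ha, h.1]
  rfl

set_option maxRecDepth 100000 in
lemma D1 : ∀ σ : Perm (Fin 5), σ.support.card = 3 →
    (σ = b5 * b5 * u1 * b5 * u1 * b5 * b5 ∨ σ = b5 * u1 * b5 * u1 * b5 * b5 * b5 * u1 * b5 * u1 * b5 ∨ σ = b5 * u1 * b5 * u1 * b5 * b5 * b5 ∨ σ = u1 * b5 * b5 * b5 * u1 * b5 * b5 * b5 ∨ σ = b5 * b5 * b5 * u1 * b5 * u1 ∨ σ = u1 * b5 * b5 * u1 * b5 * b5 * b5 * b5 ∨ σ = b5 * b5 * u1 * b5 * b5 * u1 ∨ σ = b5 * u1 * b5 * b5 * b5 * u1 ∨ σ = u1 * b5 * u1 * b5 * b5 * b5 * b5 ∨ σ = u1 * b5 * u1 * b5 * b5 * u1 * b5 * u1 ∨ σ = b5 * b5 * b5 * b5 * u1 * b5 * u1 ∨ σ = b5 * b5 * u1 * b5 * u1 * b5 ∨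 σ = b5 * u1 * b5 * b5 * b5 * u1 * b5 * b5 ∨ σ = b5 * u1 * b5 * b5 * u1 * b5 * b5 * b5 ∨ σ = b5 * u1 * b5 * b5 * u1 * b5 ∨ σ = u1 * b5 * b5 * b5 * u1 * b5 ∨ σ = b5 * b5 * b5 * u1 * b5 * u1 * b5 ∨ σ = b5 * u1 * b5 * u1 * b5 * b5 ∨ σ = u1 * b5 * b5 * u1 * b5 * b5 ∨ σ = u1 * b5 * u1 * b5 * b5 * b5) := by decide

set_option maxRecDepth 100000 in
lemma D2 : ∀ σ : Perm (Fin 5), σ.support.card = 3 →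
    (σ = u2 * b5 * b5 * b5 * u2 * b5 * b5 ∨ σ = b5 * b5 * b5 * u2 * b5 * b5 * u2 ∨ σ = u2 * b5 * b5 * b5 * u2 * b5 * u2 ∨ σ = b5 * b5 * b5 * u2 * b5 * b5 * b5 ∨ σ = b5 * u2 * b5 * b5 * b5 * u2 ∨ σ = u2 * b5 ∨ σ = b5 * b5 * u2 * b5 * b5 ∨ σ = u2 * b5 * u2 * b5 ∨ σ = u2 * b5 * u2 * b5 * b5 * b5 * u2 ∨ σ = b5 * b5 * b5 * u2 * b5 * u2 ∨ σ = b5 * b5 * u2 * b5 * b5 * b5 * u2 ∨ σ = u2 * b5 * b5 * b5 * u2 * b5 ∨ σ = u2 * b5 * u2 * b5 * b5 * b5 ∨ σ = b5 * u2 ∨ σ = b5 * u2 * b5 * b5 * b5 ∨ σ = b5 * b5 * b5 * u2 * b5 ∨ σ = b5 * u2 * b5 * b5 * b5 * u2 * b5 ∨ σ = u2 * b5 * b5 * u2 * b5 * b5 * b5 ∨ σ = b5 * u2 * b5 * u2 ∨ σ = u2 * b5 * b5 * u2 * b5 * b5 * u2) := by decide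

set_option maxRecDepth 100000 in
lemma D3 : ∀ σ : Perm (Fin 6), σ.support.card = 3 → σ 5 = 5 →
    (σ = b6 * b6 * c6 * b6 * b6 * c6 * b6 * b6 ∨ σ = c6 * b6 * b6 * c6 ∨ σ = b6 * b6 * c6 * c6 * c6 * b6 * c6 * c6 * c6 ∨ σ = b6 * c6 * c6 * c6 * c6 * b6 * c6 * c6 ∨ σ = b6 * b6 * b6 * c6 * b6 * b6 * b6 * c6 * c6 ∨ σ = c6 * b6 * b6 * b6 * c6 * c6 * b6 * b6 * b6 ∨ σ = c6 * c6 * b6 * c6 * c6 * c6 * c6 ∨ σ = c6 * c6 * b6 * b6 * b6 * c6 ∨ σ = c6 * c6 * c6 * c6 * b6 * c6 * c6 * b6 ∨ σ = b6 * c6 * c6 * b6 * c6 * c6 * c6 * c6 ∨ σ = c6 * b6 * c6 * c6 * c6 * c6 * b6 * c6 ∨ σ = c6 * b6 * b6 * c6 * b6 * b6 * b6 * b6 ∨ σ = c6 * c6 * b6 * b6 * c6 * c6 * c6 * b6 * c6 ∨ σ = c6 * b6 * b6 * b6 * c6 * c6 ∨ σ = b6 * b6 * b6 * b6 * c6 *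 b6 * b6 * c6 ∨ σ = b6 * c6 * b6 * b6 * b6 * c6 * c6 * b6 * b6 ∨ σ = c6 * c6 * c6 * c6 * b6 * c6 * c6 ∨ σ = c6 * c6 * c6 * b6 * c6 * c6 * c6 ∨ σ = b6 * b6 * b6 * c6 * c6 * b6 * b6 * b6 * c6 ∨ σ = c6 * c6 * b6 * c6 * c6 * c6 * c6 * b6) := by decide

lemma T1 : {σ : Perm (Fin 5) | σ.IsThreeCycle} ⊆ ↑(closure ({u1, b5} : Set (Perm (Fin 5)))) := by
  intro σ hσ
  have hu : u1 ∈ closure ({u1, b5} : Set (Perm (Fin 5))) := subset_closure (Set.mem_insert _ _)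
  have hb : b5 ∈ closure ({u1, b5} : Set (Perm (Fin 5))) :=
    subset_closure (Set.mem_insert_of_mem _ rfl)
  rcases D1 σ hσ.card_support with h|h|h|h|h|h|h|h|h|h|h|h|h|h|h|h|h|h|h|h
  · rw [h]; exact mul_mem (mul_mem (mul_mem (mul_mem (mul_mem (mul_mem (hb) hb) hu) hb) hu) hb) hb
  · rw [h]; exact mul_mem (mul_mem (mul_mem (mul_mem (mul_mem (mul_mem (mul_mem (mul_mem (mul_mem (mul_mem (hb) hu) hb) hu) hb) hb) hb) hu) hb) hu) hb
  · rw [h]; exact mul_mem (mul_mem (mul_mem (mul_mem (mul_mem (mul_mem (hb) hu) hb) hu) hb) hb) hb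
  · rw [h]; exact mul_mem (mul_mem (mul_mem (mul_mem (mul_mem (mul_mem (mul_mem (hu) hb) hb) hb) hu) hb) hb) hb
  · rw [h]; exact mul_mem (mul_mem (mul_mem (mul_mem (mul_mem (hb) hb) hb) hu) hb) hu
  · rw [h]; exact mul_mem (mul_mem (mul_mem (mul_mem (mul_mem (mul_mem (mul_mem (hu) hb) hb) hu) hb) hb) hb) hb
  · rw [h]; exact mul_mem (mul_mem (mul_mem (mul_mem (mul_mem (hb) hb) hu) hb) hb) hu
  · rw [h]; exact mul_mem (mul_mem (mul_mem (mul_mem (mul_mem (hb) hu) hb) hb) hb) hu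
  · rw [h]; exact mul_mem (mul_mem (mul_mem (mul_mem (mul_mem (mul_mem (hu) hb) hu) hb) hb) hb) hb
  · rw [h]; exact mul_mem (mul_mem (mul_mem (mul_mem (mul_mem (mul_mem (mul_mem (hu) hb) hu) hb) hb) hu) hb) hu
  · rw [h]; exact mul_mem (mul_mem (mul_mem (mul_mem (mul_mem (mul_mem (hb) hb) hb) hb) hu) hb) hu
  · rw [h]; exact mul_mem (mul_mem (mul_mem (mul_mem (mul_mem (hb) hb) hu) hb) hu) hb
  · rw [h]; exact mul_mem (mul_mem (mul_mem (mul_mem (mul_mem (mul_mem (mul_mem (hb) hu) hb) hb) hb) hu) hb) hb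
  · rw [h]; exact mul_mem (mul_mem (mul_mem (mul_mem (mul_mem (mul_mem (mul_mem (hb) hu) hb) hb) hu) hb) hb) hb
  · rw [h]; exact mul_mem (mul_mem (mul_mem (mul_mem (mul_mem (hb) hu) hb) hb) hu) hb
  · rw [h]; exact mul_mem (mul_mem (mul_mem (mul_mem (mul_mem (hu) hb) hb) hb) hu) hb
  · rw [h]; exact mul_mem (mul_mem (mul_mem (mul_mem (mul_mem (mul_mem (hb) hb) hb) hu) hb) hu) hb
  · rw [h]; exact mul_mem (mul_mem (mul_mem (mul_mem (mul_mem (hb) hu) hb) hu) hb) hb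
  · rw [h]; exact mul_mem (mul_mem (mul_mem (mul_mem (mul_mem (hu) hb) hb) hu) hb) hb
  · rw [h]; exact mul_mem (mul_mem (mul_mem (mul_mem (mul_mem (hu) hb) hu) hb) hb) hb


lemma T2 : {σ : Perm (Fin 5) | σ.IsThreeCycle} ⊆ ↑(closure ({u2, b5} : Set (Perm (Fin 5)))) := by
  intro σ hσ
  have hu : u2 ∈ closure ({u2, b5} : Set (Perm (Fin 5))) := subset_closure (Set.mem_insert _ _)
  have hb : b5 ∈ closure ({u2, b5} : Set (Perm (Fin 5))) :=
    subset_closure (Set.mem_insert_of_mem _ rfl)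
  rcases D2 σ hσ.card_support with h|h|h|h|h|h|h|h|h|h|h|h|h|h|h|h|h|h|h|h
  · rw [h]; exact mul_mem (mul_mem (mul_mem (mul_mem (mul_mem (mul_mem (hu) hb) hb) hb) hu) hb) hb
  · rw [h]; exact mul_mem (mul_mem (mul_mem (mul_mem (mul_mem (mul_mem (hb) hb) hb) hu) hb) hb) hu
  · rw [h]; exact mul_mem (mul_mem (mul_mem (mul_mem (mul_mem (mul_mem (hu) hb) hb) hb) hu) hb) hu
  · rw [h]; exact mul_mem (mul_mem (mul_mem (mul_mem (mul_mem (mul_mem (hb) hb) hb) hu) hb) hb) hb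
  · rw [h]; exact mul_mem (mul_mem (mul_mem (mul_mem (mul_mem (hb) hu) hb) hb) hb) hu
  · rw [h]; exact mul_mem (hu) hb
  · rw [h]; exact mul_mem (mul_mem (mul_mem (mul_mem (hb) hb) hu) hb) hb
  · rw [h]; exact mul_mem (mul_mem (mul_mem (hu) hb) hu) hb
  · rw [h]; exact mul_mem (mul_mem (mul_mem (mul_mem (mul_mem (mul_mem (hu) hb) hu) hb) hb) hb) hu
  · rw [h]; exact mul_mem (mul_mem (mul_mem (mul_mem (mul_mem (hb) hb) hb) hu) hb) hu
  · rw [h]; exact mul_mem (mul_mem (mul_mem (mul_mem (mul_mem (mul_mem (hb) hb) hu) hb) hb) hb) hu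
  · rw [h]; exact mul_mem (mul_mem (mul_mem (mul_mem (mul_mem (hu) hb) hb) hb) hu) hb
  · rw [h]; exact mul_mem (mul_mem (mul_mem (mul_mem (mul_mem (hu) hb) hu) hb) hb) hb
  · rw [h]; exact mul_mem (hb) hu
  · rw [h]; exact mul_mem (mul_mem (mul_mem (mul_mem (hb) hu) hb) hb) hb
  · rw [h]; exact mul_mem (mul_mem (mul_mem (mul_mem (hb) hb) hb) hu) hb
  · rw [h]; exact mul_mem (mul_mem (mul_mem (mul_mem (mul_mem (mul_mem (hb) hu) hb) hb) hb) hu) hb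
  · rw [h]; exact mul_mem (mul_mem (mul_mem (mul_mem (mul_mem (mul_mem (hu) hb) hb) hu) hb) hb) hb
  · rw [h]; exact mul_mem (mul_mem (mul_mem (hb) hu) hb) hu
  · rw [h]; exact mul_mem (mul_mem (mul_mem (mul_mem (mul_mem (mul_mem (hu) hb) hb) hu) hb) hb) hu


lemma h56 : (5 : ℕ) ≤ 6 := by norm_num

lemma T3 : ∀ τ : Perm (Fin 5), τ.IsThreeCycle →
    phi h56 τ ∈ closure ({b6, c6} : Set (Perm (Fin 6))) := by
  intro τ hτ
  have hb : b6 ∈ closure ({b6, c6} : Set (Perm (Fin 6))) := subset_closure (Set.mem_insert _ _)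
  have hc : c6 ∈ closure ({b6, c6} : Set (Perm (Fin 6))) :=
    subset_closure (Set.mem_insert_of_mem _ rfl)
  have h3 : (phi h56 τ).support.card = 3 := by
    rw [phi_apply, card_support_extend_domain]
    exact hτ.card_support
  have h5 : (phi h56 τ) 5 = 5 := phi_fix _ _ _ (by decide)
  rcases D3 _ h3 h5 with h|h|h|h|h|h|h|h|h|h|h|h|h|h|h|h|h|h|h|h
  · rw [h]; exact mul_mem (mul_mem (mul_mem (mul_mem (mul_mem (mul_mem (mul_mem (hb) hb) hc) hb) hb) hc) hb) hb
  · rw [h]; exact mul_mem (mul_mem (mul_mem (hc) hb) hb) hc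
  · rw [h]; exact mul_mem (mul_mem (mul_mem (mul_mem (mul_mem (mul_mem (mul_mem (mul_mem (hb) hb) hc) hc) hc) hb) hc) hc) hc
  · rw [h]; exact mul_mem (mul_mem (mul_mem (mul_mem (mul_mem (mul_mem (mul_mem (hb) hc) hc) hc) hc) hb) hc) hc
  · rw [h]; exact mul_mem (mul_mem (mul_mem (mul_mem (mul_mem (mul_mem (mul_mem (mul_mem (hb) hb) hb) hc) hb) hb) hb) hc) hc
  · rw [h]; exact mul_mem (mul_mem (mul_mem (mul_mem (mul_mem (mul_mem (mul_mem (mul_mem (hc) hb) hb) hb) hc) hc) hb) hb) hb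
  · rw [h]; exact mul_mem (mul_mem (mul_mem (mul_mem (mul_mem (mul_mem (hc) hc) hb) hc) hc) hc) hc
  · rw [h]; exact mul_mem (mul_mem (mul_mem (mul_mem (mul_mem (hc) hc) hb) hb) hb) hc
  · rw [h]; exact mul_mem (mul_mem (mul_mem (mul_mem (mul_mem (mul_mem (mul_mem (hc) hc) hc) hc) hb) hc) hc) hb
  · rw [h]; exact mul_mem (mul_mem (mul_mem (mul_mem (mul_mem (mul_mem (mul_mem (hb) hc) hc) hb) hc) hc) hc) hc
  · rw [h]; exact mul_mem (mul_mem (mul_mem (mul_mem (mul_mem (mul_mem (mul_mem (hc) hb) hc) hc) hc) hc) hb) hc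
  · rw [h]; exact mul_mem (mul_mem (mul_mem (mul_mem (mul_mem (mul_mem (mul_mem (hc) hb) hb) hc) hb) hb) hb) hb
  · rw [h]; exact mul_mem (mul_mem (mul_mem (mul_mem (mul_mem (mul_mem (mul_mem (mul_mem (hc) hc) hb) hb) hc) hc) hc) hb) hc
  · rw [h]; exact mul_mem (mul_mem (mul_mem (mul_mem (mul_mem (hc) hb) hb) hb) hc) hc
  · rw [h]; exact mul_mem (mul_mem (mul_mem (mul_mem (mul_mem (mul_mem (mul_mem (hb) hb) hb) hb) hc) hb) hb) hc
  · rw [h]; exact mul_mem (mul_mem (mul_mem (mul_mem (mul_mem (mul_mem (mul_mem (mul_mem (hb) hc) hb) hb) hb) hc) hc) hb) hb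
  · rw [h]; exact mul_mem (mul_mem (mul_mem (mul_mem (mul_mem (mul_mem (hc) hc) hc) hc) hb) hc) hc
  · rw [h]; exact mul_mem (mul_mem (mul_mem (mul_mem (mul_mem (mul_mem (hc) hc) hc) hb) hc) hc) hc
  · rw [h]; exact mul_mem (mul_mem (mul_mem (mul_mem (mul_mem (mul_mem (mul_mem (mul_mem (hb) hb) hb) hc) hc) hb) hb) hb) hc
  · rw [h]; exact mul_mem (mul_mem (mul_mem (mul_mem (mul_mem (mul_mem (mul_mem (hc) hc) hb) hc) hc) hc) hc) hb


lemma A1 : alternatingGroup (Fin 5) ≤ closure ({u1, b5} : Set (Perm (Fin 5))) := by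
  rw [← closure_three_cycles_eq_alternating]
  exact (closure_le _).2 T1

lemma A2 : alternatingGroup (Fin 5) ≤ closure ({u2, b5} : Set (Perm (Fin 5))) := by
  rw [← closure_three_cycles_eq_alternating]
  exact (closure_le _).2 T2

lemma A3 : (alternatingGroup (Fin 5)).map (phi h56) ≤ closure ({b6, c6} : Set (Perm (Fin 6))) := by
  rw [← closure_three_cycles_eq_alternating, MonoidHom.map_closure]
  refine (closure_le _).2 ?_
  rintro _ ⟨τ, hτ, rfl⟩
  exact T3 τ hτ

def Works {n : ℕ} (x : Perm (Fin n)) : Prop :=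
  ∃ y : Perm (Fin n), orderOf y = 5 ∧ ∃ H : Subgroup (Perm (Fin n)),
    H ≤ closure {x, y} ∧ Nonempty (H ≃* alternatingGroup (Fin 5))

lemma works_conj {n : ℕ} {x₀ x : Perm (Fin n)} (h : IsConj x₀ x) (hw : Works x₀) : Works x := by
  obtain ⟨c, hc⟩ := isConj_iff.1 h
  obtain ⟨y₀, hy₀, H₀, hH₀, ⟨e₀⟩⟩ := hw
  set f := (MulAut.conj c).toMonoidHom with hf
  have hinj : Function.Injective f := (MulAut.conj c).injective
  have hfx : f x₀ = x := by
    show c * x₀ * c⁻¹ = x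
    exact hc
  refine ⟨f y₀, ?_, H₀.map f, ?_, ⟨(equivMapOfInjective H₀ f hinj).symm.trans e₀⟩⟩
  · exact (orderOf_injective f hinj y₀).trans hy₀
  · have hcl : closure ({x, f y₀} : Set (Perm (Fin n))) = (closure {x₀, y₀}).map f := by
      rw [MonoidHom.map_closure, Set.image_pair, hfx]
    rw [hcl]
    exact map_mono hH₀

lemma b5_order : orderOf b5 = 5 := by
  haveI : Fact (Nat.Prime 5) := ⟨by norm_num⟩
  exact orderOf_eq_prime (by decide) (by decide)

lemma b6_order : orderOf b6 = 5 := by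
  haveI : Fact (Nat.Prime 5) := ⟨by norm_num⟩
  exact orderOf_eq_prime (by decide) (by decide)

lemma works_small {n : ℕ} (h5 : 5 ≤ n) (u : Perm (Fin 5))
    (hu : alternatingGroup (Fin 5) ≤ closure ({u, b5} : Set (Perm (Fin 5)))) :
    Works (phi h5 u) := by
  refine ⟨phi h5 b5, ?_, (alternatingGroup (Fin 5)).map (phi h5), ?_,
    ⟨(equivMapOfInjective _ _ (phi_inj h5)).symm⟩⟩
  · exact (orderOf_injective _ (phi_inj h5) b5).trans b5_order
  · calc (alternatingGroup (Fin 5)).map (phi h5) ≤ (closure {u, b5}).map (phi h5) := map_mono hu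
      _ = closure {phi h5 u, phi h5 b5} := by rw [MonoidHom.map_closure, Set.image_pair]

lemma works_big {n : ℕ} (h6 : 6 ≤ n) (R : Perm (Fin n))
    (hRfix : ∀ z : Fin n, z.val < 6 → R z = z) (hR2 : R * R = 1) :
    Works (phi h6 a6 * R) := by
  have hdisj : ∀ g : Perm (Fin 6), Perm.Disjoint (phi h6 g) R := by
    intro g z
    by_cases hz : z.val < 6
    · exact Or.inr (hRfix z hz)
    · exact Or.inl (phi_fix _ _ _ hz)
  have ea : phi h6 a6 * R = R * phi h6 a6 := (hdisj a6).commute.eq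
  have eb : phi h6 b6 * R = R * phi h6 b6 := (hdisj b6).commute.eq
  set A := phi h6 a6
  set B := phi h6 b6
  have hxyx : A * R * B * (A * R) = phi h6 c6 := by
    have hcc : phi h6 c6 = A * B * A := by
      show phi h6 (a6 * b6 * a6) = _
      rw [map_mul, map_mul]
    rw [hcc]
    calc A * R * B * (A * R) = A * (R * B) * (A * R) := by rw [mul_assoc A R B]
      _ = A * (B * R) * (A * R) := by rw [← eb]
      _ = A * B * (R * A) * R := by simp only [mul_assoc]
      _ = A * B * (A * R) * R := by rw [← ea]
      _ = A * B * A * (R * R) := by simp only [mul_assoc]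
      _ = A * B * A := by rw [hR2, mul_one]
  have hxmem : A * R ∈ closure ({A * R, B} : Set (Perm (Fin n))) :=
    subset_closure (Set.mem_insert _ _)
  have hymem : B ∈ closure ({A * R, B} : Set (Perm (Fin n))) :=
    subset_closure (Set.mem_insert_of_mem _ rfl)
  have hc6mem : phi h6 c6 ∈ closure ({A * R, B} : Set (Perm (Fin n))) := by
    rw [← hxyx]
    exact mul_mem (mul_mem hxmem hymem) hxmem
  have hkey : closure ({B, phi h6 c6} : Set (Perm (Fin n))) ≤ closure {A * R, B} := by
    apply (closure_le _).2
    rintro z (rfl | rfl)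
    exacts [hymem, hc6mem]
  have hinj : Function.Injective ((phi h6).comp (phi h56)) := by
    rw [MonoidHom.coe_comp]
    exact (phi_inj h6).comp (phi_inj h56)
  refine ⟨B, ?_, (alternatingGroup (Fin 5)).map ((phi h6).comp (phi h56)), ?_, ?_⟩
  · exact (orderOf_injective _ (phi_inj h6) b6).trans b6_order
  · rw [← Subgroup.map_map]
    calc ((alternatingGroup (Fin 5)).map (phi h56)).map (phi h6)
        ≤ (closure ({b6, c6} : Set (Perm (Fin 6)))).map (phi h6) := map_mono A3
      _ = closure ({B, phi h6 c6} : Set (Perm (Fin n))) := by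
          rw [MonoidHom.map_closure, Set.image_pair]
      _ ≤ closure {A * R, B} := hkey
  · exact ⟨(equivMapOfInjective _ _ hinj).symm⟩

lemma not_solv {n : ℕ} (C H : Subgroup (Perm (Fin n))) (hH : H ≤ C)
    (e : H ≃* alternatingGroup (Fin 5)) : ¬ IsSolvable C := by
  intro (hsolv : Group.IsSolvable C)
  haveI : Group.IsSolvable H := solvable_of_solvable_injective (Subgroup.inclusion_injective hH)
  haveI : Group.IsSolvable (alternatingGroup (Fin 5)) :=
    solvable_of_solvable_injective (f := e.symm.toMonoidHom) (by exact e.symm.injective)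
  have : Group.IsSolvable (Perm (Fin 5)) := by
    apply solvable_of_ker_le_range (alternatingGroup (Fin 5)).subtype (Perm.sign)
    rw [range_subtype]
    exact le_of_eq rfl
  exact Equiv.Perm.fin_5_not_solvable this

theorem main (n : ℕ) (hn : 5 ≤ n) (hn6 : n ≠ 6)
    (x : Equiv.Perm (Fin n)) (hx : orderOf x = 2) :
    ∃ y : Equiv.Perm (Fin n), orderOf y = 5 ∧
      (∃ H : Subgroup (Equiv.Perm (Fin n)), H ≤ Subgroup.closure {x, y} ∧
        Nonempty (↥H ≃* ↥(alternatingGroup (Fin 5)))) ∧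
      ¬ IsSolvable ↥(Subgroup.closure {x, y}) := by
  have hw : Works x := by
    have hct : x.cycleType = Multiset.replicate (Multiset.card x.cycleType) 2 := by
      refine Multiset.eq_replicate.2 ⟨rfl, ?_⟩
      intro b hb
      have h2b := Equiv.Perm.two_le_of_mem_cycleType hb
      have hdvd : b ∣ 2 := by
        have := Multiset.dvd_lcm hb
        rwa [Equiv.Perm.lcm_cycleType, hx] at this
      have := Nat.le_of_dvd (by norm_num) hdvd
      omega
    set k := Multiset.card x.cycleType with hk
    have hk1 : k ≠ 0 := by
      intro h0
      have hcz : Multiset.card x.cycleType = 0 := by rw [← hk]; exact h0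
      have hx1 : x = 1 := Equiv.Perm.card_cycleType_eq_zero.1 hcz
      rw [hx1, orderOf_one] at hx
      exact absurd hx (by norm_num)
    have h2k : 2 * k ≤ n := by
      have hs := Equiv.Perm.sum_cycleType x
      rw [hct] at hs
      rw [Multiset.sum_replicate, smul_eq_mul] at hs
      have hsup : x.support.card ≤ n := by
        have := Finset.card_le_univ x.support
        simpa using this
      omega
    rcases lt_or_ge k 3 with hk3 | hk3
    · have hk12 : k = 1 ∨ k = 2 := by omega
      rcases hk12 with hke | hke
      · apply works_conj ?_ (works_small hn u1 A1)
        apply isConj_of_cycleType_eq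
        rw [phi_cycleType, u1_ct, hct, hke]
      · apply works_conj ?_ (works_small hn u2 A2)
        apply isConj_of_cycleType_eq
        rw [phi_cycleType, u2_ct, hct, hke]
    · -- k ≥ 3
      have h6n : 6 ≤ n := by omega
      obtain ⟨m, hm⟩ : ∃ m, k = m + 3 := ⟨k - 3, by omega⟩
      set fl : Fin m → Perm (Fin n) := fun i =>
        swap ⟨6 + 2 * i.val, by have := i.2; omega⟩ ⟨7 + 2 * i.val, by have := i.2; omega⟩
        with hfl
      set l : List (Perm (Fin n)) := List.ofFn fl with hll
      have hmem : ∀ g ∈ l, ∃ i : Fin m, g = fl i := by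
        intro g hg
        rw [hll, List.mem_ofFn] at hg
        obtain ⟨i, hi⟩ := hg
        exact ⟨i, hi.symm⟩
      have hfix : ∀ z : Fin n, z.val < 6 → l.prod z = z := by
        intro z hz
        apply prod_fix
        intro g hg
        obtain ⟨i, rfl⟩ := hmem g hg
        exact swap_apply_of_ne_of_ne
          (Fin.ne_of_val_ne (show z.val ≠ 6 + 2 * i.val by omega))
          (Fin.ne_of_val_ne (show z.val ≠ 7 + 2 * i.val by omega))
      have hpair : l.Pairwise Perm.Disjoint := by
        rw [hll, List.pairwise_ofFn]
        intro i j hij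
        have hij' : i.val < j.val := hij
        intro z
        by_cases hz : z.val = 6 + 2 * i.val ∨ z.val = 7 + 2 * i.val
        · right
          rcases hz with hz | hz <;>
            exact swap_apply_of_ne_of_ne
              (Fin.ne_of_val_ne (show z.val ≠ 6 + 2 * j.val by omega))
              (Fin.ne_of_val_ne (show z.val ≠ 7 + 2 * j.val by omega))
        · push_neg at hz
          left
          exact swap_apply_of_ne_of_ne
            (Fin.ne_of_val_ne (show z.val ≠ 6 + 2 * i.val from hz.1))
            (Fin.ne_of_val_ne (show z.val ≠ 7 + 2 * i.val from hz.2))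
      have hswaps : ∀ g ∈ l, Perm.IsSwap g := by
        intro g hg
        obtain ⟨i, rfl⟩ := hmem g hg
        exact ⟨_, _, Fin.ne_of_val_ne (show 6 + 2 * i.val ≠ 7 + 2 * i.val by omega), rfl⟩
      obtain ⟨hRct, hR2⟩ := swapList l hpair hswaps
      have hlen : l.length = m := by rw [hll, List.length_ofFn]
      apply works_conj ?_ (works_big h6n l.prod hfix hR2)
      apply isConj_of_cycleType_eq
      have hdisj : Perm.Disjoint (phi h6n a6) l.prod := by
        intro z
        by_cases hz : z.val < 6
        · exact Or.inr (hfix z hz)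
        · exact Or.inl (phi_fix _ _ _ hz)
      rw [Perm.Disjoint.cycleType_mul hdisj, phi_cycleType, a6_ct, hRct, hlen, hct, hm,
        ← Multiset.replicate_add, Nat.add_comm]
  obtain ⟨y, hy, H, hH, hiso⟩ := hw
  exact ⟨y, hy, ⟨H, hH, hiso⟩, not_solv _ H hH hiso.some⟩

end Stmt17

/-- for `n ≥ 5`, `n ≠ 6`, and any involution `x ∈ Sₙ`, there is
an element `y` of order `5` such that `⟨x, y⟩` is nonsolvable; indeed `⟨x, y⟩`
contains a copy of `A₅`. -/
theorem stmt_17 (n : ℕ) (hn : 5 ≤ n) (hn6 : n ≠ 6)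
    (x : Equiv.Perm (Fin n)) (hx : orderOf x = 2) :
    ∃ y : Equiv.Perm (Fin n), orderOf y = 5 ∧
      (∃ H : Subgroup (Equiv.Perm (Fin n)), H ≤ Subgroup.closure {x, y} ∧
        Nonempty (↥H ≃* ↥(alternatingGroup (Fin 5)))) ∧
      ¬ IsSolvable ↥(Subgroup.closure {x, y}) :=
  Stmt17.main n hn hn6 x hx
end

section
/- Let G = A_n with n ≥ 5 and let x ∈ G have order 3. Then there exists a 2-element y ∈ G such that ⟨x, y⟩ is not solvable. Specifically, any order-3 element is conjugate to x = (1,2,3) or to x = (1,2,3)(4,5,6)x₁ with x₁ ∈ Sym{7,…,n}, x₁³ = 1; in the first case y = (1,4)(3,5) works and in the second case y = (1,2)(3,4) works. -/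
set_option maxRecDepth 10000

open scoped commutatorElement

private def X5 : Equiv.Perm (Fin 5) := Equiv.swap 0 1 * Equiv.swap 1 2
private def Y5 : Equiv.Perm (Fin 5) := Equiv.swap 0 3 * Equiv.swap 2 4
private def X6 : Equiv.Perm (Fin 6) :=
  Equiv.swap 0 1 * Equiv.swap 1 2 * Equiv.swap 3 4 * Equiv.swap 4 5
private def Y6 : Equiv.Perm (Fin 6) := Equiv.swap 0 1 * Equiv.swap 2 3


private lemma inj5 {n : ℕ} {a b c d e : Fin n}
    (h1 : a ≠ b) (h2 : a ≠ c) (h3 : a ≠ d) (h4 : a ≠ e)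
    (h5 : b ≠ c) (h6 : b ≠ d) (h7 : b ≠ e)
    (h8 : c ≠ d) (h9 : c ≠ e) (h10 : d ≠ e) :
    Function.Injective ![a, b, c, d, e] := by
  intro i j hij
  fin_cases i <;> fin_cases j <;>
    first | rfl | exact absurd hij h1 | exact absurd hij.symm h1 | exact absurd hij h2 | exact absurd hij.symm h2 | exact absurd hij h3 | exact absurd hij.symm h3 | exact absurd hij h4 | exact absurd hij.symm h4 | exact absurd hij h5 | exact absurd hij.symm h5 | exact absurd hij h6 | exact absurd hij.symm h6 | exact absurd hij h7 | exact absurd hij.symm h7 | exact absurd hij h8 | exact absurd hij.symm h8 | exact absurd hij h9 | exact absurd hij.symm h9 | exact absurd hij h10 | exact absurd hij.symm h10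

private lemma inj6 {n : ℕ} {a b c d e f : Fin n}
    (h1 : a ≠ b) (h2 : a ≠ c) (h3 : a ≠ d) (h4 : a ≠ e) (h5 : a ≠ f)
    (h6 : b ≠ c) (h7 : b ≠ d) (h8 : b ≠ e) (h9 : b ≠ f)
    (h10 : c ≠ d) (h11 : c ≠ e) (h12 : c ≠ f)
    (h13 : d ≠ e) (h14 : d ≠ f) (h15 : e ≠ f) :
    Function.Injective ![a, b, c, d, e, f] := by
  intro i j hij
  fin_cases i <;> fin_cases j <;>
    first | rfl | exact absurd hij h1 | exact absurd hij.symm h1 | exact absurd hij h2 | exact absurd hij.symm h2 | exact absurd hij h3 | exact absurd hij.symm h3 | exact absurd hij h4 | exact absurd hij.symm h4 | exact absurd hij h5 | exact absurd hij.symm h5 | exact absurd hij h6 | exact absurd hij.symm h6 | exact absurd hij h7 | exact absurd hij.symm h7 | exact absurd hij h8 | exact absurd hij.symm h8 | exact absurd hij h9 | exact absurd hij.symm h9 | exact absurd hij h10 | exact absurd hij.symm h10 | exact absurd hij h11 | exact absurd hij.symm h11 | exact absurd hij h12 | exact absurd hij.symm h12 | exact absurd hij h13 | exact absurd hij.symm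 h13 | exact absurd hij h14 | exact absurd hij.symm h14 | exact absurd hij h15 | exact absurd hij.symm h15

private lemma conj_via {α β : Type*} (f : α ↪ β) (x : Equiv.Perm β) (X : Equiv.Perm α)
    (h : ∀ i, x (f i) = f (X i)) (σ : Equiv.Perm α) :
    x * σ.viaEmbedding f * x⁻¹ = (X * σ * X⁻¹).viaEmbedding f := by
  rw [mul_inv_eq_iff_eq_mul]
  ext p
  by_cases hp : p ∈ Set.range f
  · obtain ⟨i, rfl⟩ := hp
    simp only [Equiv.Perm.mul_apply, Equiv.Perm.viaEmbedding_apply, h]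
    simp
  · have hxp : x p ∉ Set.range f := by
      rintro ⟨j, hj⟩
      have h2 : x (f (X⁻¹ j)) = f j := by rw [h]; simp
      exact hp ⟨X⁻¹ j, (x.injective (hj.symm.trans h2.symm)).symm⟩
    simp only [Equiv.Perm.mul_apply, Equiv.Perm.viaEmbedding_apply_of_notMem σ f p hp,
      Equiv.Perm.viaEmbedding_apply_of_notMem _ f (x p) hxp]

open Subgroup in
private lemma aux_main {m n : ℕ} (f : Fin m ↪ Fin n)
    (x : ↥(alternatingGroup (Fin n))) (X Y : Equiv.Perm (Fin m))
    (h : ∀ i, (x : Equiv.Perm (Fin n)) (f i) = f (X i))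
    (hYs : Equiv.Perm.sign Y = 1) (hY2 : Y ^ 2 = 1) (hY1 : Y ≠ 1)
    (hT1 : ⁅X, Y⁆ ≠ 1)
    (hkey : ⁅(Y * X) * ⁅X, Y⁆ * (Y * X)⁻¹, (X * X) * ⁅X, Y⁆ * (X * X)⁻¹⁆ = ⁅X, Y⁆) :
    ∃ y : ↥(alternatingGroup (Fin n)), (∃ k : ℕ, orderOf y = 2 ^ k) ∧
      ¬ IsSolvable ↥(Subgroup.closure {x, y}) := by
  obtain ⟨x', hxA⟩ := x
  set A := alternatingGroup (Fin n) with hA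
  set φ := Equiv.Perm.viaEmbeddingHom f with hφ
  have hφinj : Function.Injective φ := Equiv.Perm.viaEmbeddingHom_injective f
  set yP : Equiv.Perm (Fin n) := φ Y with hyP
  have h' : ∀ i, x' (f i) = f (X i) := fun i => h i
  clear h
  have hconj : ∀ σ : Equiv.Perm (Fin m), x' * φ σ * x'⁻¹ = φ (X * σ * X⁻¹) :=
    fun σ => conj_via f x' X h' σ
  have hymem : yP ∈ A := by
    rw [Equiv.Perm.mem_alternatingGroup]
    show Equiv.Perm.sign (Y.viaEmbedding f) = 1
    rw [Equiv.Perm.viaEmbedding, Equiv.Perm.sign_extendDomain, hYs]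
  refine ⟨⟨yP, hymem⟩, ⟨1, ?_⟩, ?_⟩
  · have h1 : orderOf (⟨yP, hymem⟩ : ↥A) = orderOf yP :=
      (orderOf_injective A.subtype A.subtype_injective _).symm
    have h2 : orderOf yP = orderOf Y := orderOf_injective φ hφinj Y
    rw [h1, h2, pow_one]
    exact orderOf_eq_prime hY2 hY1
  · intro hsolv
    set K : Subgroup (Equiv.Perm (Fin n)) := Subgroup.closure {x', yP} with hK
    have hmap : Subgroup.map A.subtype
        (Subgroup.closure {⟨x', hxA⟩, (⟨yP, hymem⟩ : ↥A)}) = K := by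
      rw [MonoidHom.map_closure]
      congr 1
      rw [Set.image_insert_eq, Set.image_singleton]
      rfl
    have hKsolv : IsSolvable ↥K := by
      rw [← hmap]
      haveI : Group.IsSolvable _ := hsolv
      set e := (Subgroup.closure {⟨x', hxA⟩, (⟨yP, hymem⟩ : ↥A)}).equivMapOfInjective
          A.subtype A.subtype_injective
      have hes : Function.Surjective (e.toMonoidHom :
          ↥(Subgroup.closure {⟨x', hxA⟩, (⟨yP, hymem⟩ : ↥A)}) →*
          ↥(Subgroup.map A.subtype (Subgroup.closure {⟨x', hxA⟩, (⟨yP, hymem⟩ : ↥A)}))) :=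
        e.surjective
      exact solvable_of_surjective hes
    set T : Equiv.Perm (Fin m) := ⁅X, Y⁆ with hT
    set tP : Equiv.Perm (Fin n) := φ T with htP
    have ht : tP = ⁅x', yP⁆ := by
      have e1 : x' * yP * x'⁻¹ * yP⁻¹ = φ (X * Y * X⁻¹) * φ Y⁻¹ := by
        rw [hconj Y, map_inv]
      rw [commutatorElement_def, e1, ← map_mul]
      rfl
    have hxK : x' ∈ K := Subgroup.subset_closure (Set.mem_insert _ _)
    have hyK : yP ∈ K := Subgroup.subset_closure (Set.mem_insert_of_mem _ rfl)
    have htK : tP ∈ K := by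
      rw [ht, commutatorElement_def]
      exact mul_mem (mul_mem (mul_mem hxK hyK) (inv_mem hxK)) (inv_mem hyK)
    set P : Equiv.Perm (Fin n) := yP * x' with hP
    set Q : Equiv.Perm (Fin n) := x' * x' with hQ
    have hpK : P ∈ K := mul_mem hyK hxK
    have hqK : Q ∈ K := mul_mem hxK hxK
    have hkeyP : ⁅P * tP * P⁻¹, Q * tP * Q⁻¹⁆ = tP := by
      have e1 : P * tP * P⁻¹ = φ (Y * (X * T * X⁻¹) * Y⁻¹) := by
        rw [hP, mul_inv_rev]
        calc yP * x' * tP * (x'⁻¹ * yP⁻¹)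
            = yP * (x' * tP * x'⁻¹) * yP⁻¹ := by group
          _ = yP * φ (X * T * X⁻¹) * yP⁻¹ := by rw [hconj T]
          _ = φ Y * φ (X * T * X⁻¹) * (φ Y)⁻¹ := rfl
          _ = φ (Y * (X * T * X⁻¹) * Y⁻¹) := by rw [← map_inv, ← map_mul, ← map_mul]
      have e2 : Q * tP * Q⁻¹ = φ (X * (X * T * X⁻¹) * X⁻¹) := by
        rw [hQ, mul_inv_rev]
        calc x' * x' * tP * (x'⁻¹ * x'⁻¹)
            = x' * (x' * tP * x'⁻¹) * x'⁻¹ := by group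
          _ = x' * φ (X * T * X⁻¹) * x'⁻¹ := by rw [hconj T]
          _ = φ (X * (X * T * X⁻¹) * X⁻¹) := by rw [hconj]
      rw [e1, e2, ← map_commutatorElement]
      apply congrArg φ
      rw [show Y * (X * T * X⁻¹) * Y⁻¹ = (Y * X) * T * (Y * X)⁻¹ by group,
        show X * (X * T * X⁻¹) * X⁻¹ = (X * X) * T * (X * X)⁻¹ by group]
      exact hkey
    have htne : tP ≠ 1 := fun hh => hT1 (hφinj (by rw [← htP, hh, map_one]))
    have hg1 : (⟨tP, htK⟩ : ↥K) ≠ 1 := fun hh => htne (congrArg Subtype.val hh)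
    have hmem : ∀ k : ℕ, (⟨tP, htK⟩ : ↥K) ∈ derivedSeries ↥K k := by
      intro k
      induction k with
      | zero => exact Subgroup.mem_top _
      | succ k ih =>
        have gid : (⟨tP, htK⟩ : ↥K) =
            ⁅(⟨P, hpK⟩ : ↥K) * ⟨tP, htK⟩ * (⟨P, hpK⟩ : ↥K)⁻¹,
              (⟨Q, hqK⟩ : ↥K) * ⟨tP, htK⟩ * (⟨Q, hqK⟩ : ↥K)⁻¹⁆ := by
          apply Subtype.ext
          simp only [commutatorElement_def, Subgroup.coe_mul, InvMemClass.coe_inv]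
          exact hkeyP.symm
        rw [gid]
        exact commutator_mem_commutator
          ((derivedSeries_normal _ _).conj_mem _ ih _)
          ((derivedSeries_normal _ _).conj_mem _ ih _)
    exact not_solvable_of_mem_derivedSeries hg1 hmem hKsolv

/-- for `n ≥ 5` and any element `x` of order `3` in the
alternating group `Aₙ`, there is a `2`-element `y ∈ Aₙ` such that `⟨x, y⟩` is
not solvable. -/
theorem stmt_18 (n : ℕ) (hn : 5 ≤ n)
    (x : ↥(alternatingGroup (Fin n))) (hx : orderOf x = 3) :
    ∃ y : ↥(alternatingGroup (Fin n)), (∃ k : ℕ, orderOf y = 2 ^ k) ∧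
      ¬ IsSolvable ↥(Subgroup.closure {x, y}) := by
  have hordx : orderOf (x : Equiv.Perm (Fin n)) = 3 :=
    (orderOf_injective (alternatingGroup (Fin n)).subtype
      (Subgroup.subtype_injective _) x).trans hx
  have hx3 : (x : Equiv.Perm (Fin n)) ^ 3 = 1 := by
    rw [← hordx]; exact pow_orderOf_eq_one _
  have hxne : (x : Equiv.Perm (Fin n)) ≠ 1 := by
    intro hh; rw [hh] at hordx; simp at hordx
  obtain ⟨a, ha⟩ : ∃ a, (x : Equiv.Perm (Fin n)) a ≠ a := by
    by_contra hall
    push_neg at hall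
    exact hxne (Equiv.ext hall)
  have hinj := (x : Equiv.Perm (Fin n)).injective
  have h3 : ∀ p, (x : Equiv.Perm (Fin n))
      ((x : Equiv.Perm (Fin n)) ((x : Equiv.Perm (Fin n)) p)) = p := by
    intro p
    have := Equiv.ext_iff.1 hx3 p
    simpa [pow_succ, Equiv.Perm.mul_apply] using this
  set x' : Equiv.Perm (Fin n) := (x : Equiv.Perm (Fin n)) with hxdef
  set b : Fin n := x' a with hb
  set c : Fin n := x' b with hc
  have hxc : x' c = a := h3 a
  have hba : b ≠ a := ha
  have hcb : c ≠ b := fun hh => ha (hinj hh)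
  have hca : c ≠ a := by
    intro hh
    have h1 : x' c = x' a := congrArg x' hh
    rw [hxc] at h1
    exact ha h1.symm
  -- symmetric versions
  have hab : a ≠ b := hba.symm
  have hbc : b ≠ c := hcb.symm
  have hac : a ≠ c := hca.symm
  by_cases hfix : ∀ p : Fin n, p ≠ a → p ≠ b → p ≠ c → x' p = p
  · -- case 1: x' is a 3-cycle on {a, b, c}; pick two more fixed points d, e
    have hcompl : 1 < (({a, b, c} : Finset (Fin n))ᶜ).card := by
      have h1 : ({a, b, c} : Finset (Fin n)).card ≤ 3 := by
        apply (Finset.card_insert_le _ _).trans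
        apply Nat.succ_le_succ
        apply (Finset.card_insert_le _ _).trans
        simp
      rw [Finset.card_compl, Fintype.card_fin]
      omega
    obtain ⟨d, hd, e, he, hde⟩ := Finset.one_lt_card.1 hcompl
    simp only [Finset.mem_compl, Finset.mem_insert, Finset.mem_singleton, not_or] at hd he
    obtain ⟨hda, hdb, hdc⟩ := hd
    obtain ⟨hea, heb, hec⟩ := he
    have hxd : x' d = d := hfix d hda hdb hdc
    have hxe : x' e = e := hfix e hea heb hec
    have hed : e ≠ d := hde.symm
    have hfinj : Function.Injective ![a, b, c, d, e] :=
      inj5 hab hac (Ne.symm hda) (Ne.symm hea) hbc (Ne.symm hdb) (Ne.symm heb) (Ne.symm hdc) (Ne.symm hec) hde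
    refine aux_main ⟨![a, b, c, d, e], hfinj⟩ x X5 Y5 ?_ (by decide) (by decide) (by decide)
      (by decide) (by decide)
    intro i
    fin_cases i <;> first | rfl | exact hxc | exact hxd | exact hxe
  · -- case 2: x' moves a point d outside {a, b, c}
    push_neg at hfix
    obtain ⟨d, hda, hdb, hdc, hd⟩ := hfix
    set e : Fin n := x' d with he
    set f6 : Fin n := x' e with hf6
    have hxf : x' f6 = d := h3 d
    have hed : e ≠ d := hd
    have hfe : f6 ≠ e := fun hh => hd (hinj hh)
    have hfd : f6 ≠ d := by
      intro hh
      have h1 : x' f6 = x' d := congrArg x' hh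
      rw [hxf] at h1
      exact hd h1.symm
    have hea : e ≠ a := fun hh => hdc (hinj (hh.trans hxc.symm))
    have heb : e ≠ b := fun hh => hda (hinj hh)
    have hec : e ≠ c := fun hh => hdb (hinj hh)
    have hfa : f6 ≠ a := fun hh => hec (hinj (hh.trans hxc.symm))
    have hfb : f6 ≠ b := fun hh => hea (hinj hh)
    have hfc : f6 ≠ c := fun hh => heb (hinj hh)
    have hfinj : Function.Injective ![a, b, c, d, e, f6] :=
      inj6 hab hac (Ne.symm hda) (Ne.symm hea) (Ne.symm hfa) hbc (Ne.symm hdb)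
        (Ne.symm heb) (Ne.symm hfb) (Ne.symm hdc) (Ne.symm hec) (Ne.symm hfc)
        (Ne.symm hed) (Ne.symm hfd) (Ne.symm hfe)
    refine aux_main ⟨![a, b, c, d, e, f6], hfinj⟩ x X6 Y6 ?_ (by decide) (by decide) (by decide)
      (by decide) (by decide)
    intro i
    fin_cases i <;> first | rfl | exact hxc | exact hxf
end

section
/- Let G be a finite group, x an automorphism of G, and suppose M = C_G(x) has trivial center and there exists g ∈ G \ M with g^x g⁻¹ ∈ M. Then x normalizes M^g, and if x centralizes M^g then g^x g⁻¹ ∈ Z(M) = 1, contradicting g^x ≠ g; hence x normalizes but does not centralize M^g. -/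
/-- let `x` be an automorphism of a finite group `G` with
fixed-point subgroup `M = C_G(x)` having trivial center, and suppose
`g ∈ G \ M` satisfies `gˣ g⁻¹ ∈ M`.  Then `x` normalizes the conjugate
`Mᵍ = g⁻¹ M g` but does not centralize it. -/
theorem stmt_19 {G : Type*} [Group G] [Finite G] (x : MulAut G)
    (M : Subgroup G) (hM : ∀ g : G, g ∈ M ↔ x g = g)
    (hZ : ∀ m ∈ M, (∀ m' ∈ M, m * m' = m' * m) → m = 1)
    (g : G) (hg : g ∉ M) (hgx : x g * g⁻¹ ∈ M) :
    (∀ h ∈ M.map (MulAut.conj g⁻¹).toMonoidHom,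
      x h ∈ M.map (MulAut.conj g⁻¹).toMonoidHom) ∧
    ¬ ∀ h ∈ M.map (MulAut.conj g⁻¹).toMonoidHom, x h = h := by
  have hxg : x g = (x g * g⁻¹) * g := by group
  constructor
  · rintro h ⟨m, hm, rfl⟩
    refine ⟨(x g * g⁻¹)⁻¹ * m * (x g * g⁻¹), M.mul_mem (M.mul_mem (M.inv_mem hgx) hm) hgx, ?_⟩
    simp only [MulEquiv.coe_toMonoidHom, MulAut.conj_apply]
    simp only [map_mul, map_inv, (hM m).mp hm, (hM _).mp hgx]
    rw [hxg]
    group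
  · intro hc
    apply hg
    rw [hM]
    have h1 : x g * g⁻¹ = 1 := by
      apply hZ _ hgx
      intro m' hm'
      have := hc (g⁻¹ * m' * g) ⟨m', hm', by simp [MulAut.conj_apply]⟩
      simp only [map_mul, map_inv, (hM m').mp hm'] at this
      have h3 : g * ((x g)⁻¹ * (m' * (x g * g⁻¹))) = m' := by
        have := congrArg (fun y => g * y * g⁻¹) this
        simpa [mul_assoc] using this
      have h4 := congrArg (fun y => (x g * g⁻¹) * y) h3
      simpa [mul_assoc] using h4.symm
    have := congrArg (· * g) h1
    simpa using this
end
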